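/- arXiv:2205.09044 — 2 statements merged into one kernel-verified Lean document; each statement's English description precedes it below -/
import Mathlib

section
/- Let A := [[1,0,1],[0,1,0],[0,0,1]] and B := [[1,0,0],[0,1,1],[0,0,1]]. There exists a sequence (A_n)_{n≥1} with each A_n ∈ {A,B} such that both rank-one matrices u·r and w·r are subsequential limits of the sequence n ↦ P_n/‖P_n‖, where u is the column vector (1/2, 1/2, 0), w is the column vector (2/3, 1/3, 0), and r is the row vector (0, 0, 1). In particular, in the approximation P_n/‖P_n‖ − c_n·r_n → 0 the column vectors c_n cannot be taken constant. -/
/-!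
Both `A` and `B` are shears `shearMat a b = !![1, 0, a; 0, 1, b; 0, 0, 1]`, which multiply by adding
their parameters, so `P_n = shearMat a_n (n - a_n)` with `a_n` the number of factors equal to `A`,
and `‖P_n‖ = n + 3`. Hence `P_n / ‖P_n‖` is close to `vecMulVec ![α, 1 - α, 0] ![0, 0, 1]` whenever
`a_n / n` is close to `α`. Choosing the factors in geometrically growing blocks makes `a_n / n`
approach `1/2` along `n = 12·2^k` and `2/3` along `n = 18·2^k`. Finally, a constant column `c`
cannot approximate two rank-one limits whose columns are not proportional: the `2 × 2` minor
`X₀₂ Y₁₂ - X₁₂ Y₀₂` vanishes on every pair `(vecMulVec c x, vecMulVec c y)` but not in the limit.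
-/

open Filter Matrix

/-- `‖X‖`: sum of the absolute values of the entries of a real matrix. -/
noncomputable def matEntrySumNorm {d : ℕ} (M : Matrix (Fin d) (Fin d) ℝ) : ℝ :=
  ∑ i, ∑ j, |M i j|

/-- `P_n = A_1 ⋯ A_n` (ordered product). -/
def matProd {d : ℕ} (A : ℕ → Matrix (Fin d) (Fin d) ℝ) (n : ℕ) :
    Matrix (Fin d) (Fin d) ℝ :=
  ((List.range n).map fun i => A (i + 1)).prod

open Topology

theorem tendsto_inv_add_smul_smul_add {ι E : Type*} [AddCommGroup E] [Module ℝ E]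
    [TopologicalSpace E] [IsTopologicalAddGroup E] [ContinuousSMul ℝ E] {l : Filter ι} {x : ι → ℝ}
    (hx : Tendsto x l atTop) (d : ℝ) (M N : E) :
    Tendsto (fun t => (x t + d)⁻¹ • (x t • M + N)) l (𝓝 M) := by
  have hxd : Tendsto (fun t => x t + d) l atTop := tendsto_atTop_add_const_right _ d hx
  have hlim : Tendsto (fun t => M + (x t + d)⁻¹ • (N - d • M)) l (𝓝 M) := by
    simpa using tendsto_const_nhds.add ((tendsto_inv_atTop_zero.comp hxd).smul_const (N - d • M))
  refine hlim.congr' ?_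
  filter_upwards [hxd.eventually_gt_atTop 0] with t ht
  have hx_eq : (x t + d)⁻¹ * x t = 1 - (x t + d)⁻¹ * d := by field_simp; ring
  rw [smul_add, smul_smul, hx_eq]
  module

theorem not_tendsto_sub_vecMulVec_const {m n : Type*} {M : ℕ → Matrix m n ℝ} {φ ψ : ℕ → ℕ}
    (hφ : Tendsto φ atTop atTop) (hψ : Tendsto ψ atTop atTop) {u w : m → ℝ} {ρ : n → ℝ}
    (hMφ : Tendsto (M ∘ φ) atTop (𝓝 (vecMulVec u ρ)))
    (hMψ : Tendsto (M ∘ ψ) atTop (𝓝 (vecMulVec w ρ))) {i i' : m} {j : n} (hρ : ρ j ≠ 0)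
    (huw : u i * w i' ≠ u i' * w i) (c : m → ℝ) (r : ℕ → n → ℝ) :
    ¬ Tendsto (fun k => M k - vecMulVec c (r k)) atTop (𝓝 0) := by
  intro h
  have hV : ∀ {χ : ℕ → ℕ} {L : Matrix m n ℝ}, Tendsto χ atTop atTop →
      Tendsto (M ∘ χ) atTop (𝓝 L) → ∀ a, Tendsto (fun k => c a * r (χ k) j) atTop (𝓝 (L a j)) := by
    intro χ L hχ hL a
    have hrank_one := (hL.sub (h.comp hχ)).apply_nhds a |>.apply_nhds j
    simpa [vecMulVec_apply] using hrank_one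
  have hcross := tendsto_nhds_unique
    (((hV hφ hMφ i).mul (hV hψ hMψ i')).congr fun k => by ring)
    ((hV hφ hMφ i').mul (hV hψ hMψ i))
  apply huw
  simp only [vecMulVec_apply] at hcross
  have hρ2 : ρ j * ρ j ≠ 0 := mul_ne_zero hρ hρ
  apply mul_right_cancel₀ hρ2
  linear_combination hcross

def shearMat (a b : ℝ) : Matrix (Fin 3) (Fin 3) ℝ := !![1, 0, a; 0, 1, b; 0, 0, 1]

theorem shearMat_zero : shearMat 0 0 = 1 := by
  rw [shearMat, one_fin_three]

theorem shearMat_mul_shearMat (a b a' b' : ℝ) :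
    shearMat a b * shearMat a' b' = shearMat (a + a') (b + b') := by
  ext i j
  fin_cases i <;> fin_cases j <;> simp [shearMat, add_comm]

theorem matEntrySumNorm_shearMat (a b : ℝ) : matEntrySumNorm (shearMat a b) = 3 + |a| + |b| := by
  simp only [matEntrySumNorm, shearMat, of_apply, cons_val', cons_val_fin_one, Fin.sum_univ_three,
    cons_val_zero, cons_val_one, cons_val, abs_one, abs_zero, add_zero, zero_add]
  ring

theorem shearMat_mul_add (x u v a b : ℝ) :
    shearMat (x * u + a) (x * v + b) = x • vecMulVec ![u, v, 0] ![0, 0, 1] + shearMat a b := by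
  ext i j
  fin_cases i <;> fin_cases j <;> simp [shearMat]

theorem matProd_succ {d : ℕ} (A : ℕ → Matrix (Fin d) (Fin d) ℝ) (n : ℕ) :
    matProd A (n + 1) = matProd A n * A (n + 1) := by
  simp [matProd, List.range_succ]

def shearSeq (p : ℕ → Prop) [DecidablePred p] (n : ℕ) : Matrix (Fin 3) (Fin 3) ℝ :=
  if p (n - 1) then shearMat 1 0 else shearMat 0 1

section shearSeq

variable (p : ℕ → Prop) [DecidablePred p]

theorem matProd_shearSeq (n : ℕ) :
    matProd (shearSeq p) n = shearMat (Nat.count p n) (n - Nat.count p n) := by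
  induction n with
  | zero => simp [matProd, shearMat_zero]
  | succ n ih =>
    rw [matProd_succ, ih, shearSeq, Nat.add_sub_cancel, Nat.count_succ]
    split_ifs <;> rw [shearMat_mul_shearMat] <;> push_cast <;> congr 1 <;> ring

theorem matEntrySumNorm_matProd_shearSeq (n : ℕ) :
    matEntrySumNorm (matProd (shearSeq p) n) = n + 3 := by
  have hcount : (Nat.count p n : ℝ) ≤ n := by exact_mod_cast Nat.count_le p
  rw [matProd_shearSeq, matEntrySumNorm_shearMat, abs_of_nonneg (Nat.cast_nonneg _),
    abs_of_nonneg (sub_nonneg.2 hcount)]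
  ring

theorem tendsto_normalized_matProd_shearSeq {φ : ℕ → ℕ} (hφ : Tendsto φ atTop atTop)
    {u v a : ℝ} (huv : u + v = 1) (hcount : ∀ k, (Nat.count p (φ k) : ℝ) = φ k * u + a) :
    Tendsto
      (fun k => (matEntrySumNorm (matProd (shearSeq p) (φ k)))⁻¹ • matProd (shearSeq p) (φ k))
      atTop (𝓝 (vecMulVec ![u, v, 0] ![0, 0, 1])) := by
  have hP : ∀ k, matProd (shearSeq p) (φ k) =
      (φ k : ℝ) • vecMulVec ![u, v, 0] ![0, 0, 1] + shearMat a (-a) := fun k => by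
    rw [matProd_shearSeq, hcount, ← shearMat_mul_add]
    congr 1
    linear_combination -(φ k : ℝ) * huv
  simp_rw [matEntrySumNorm_matProd_shearSeq, hP]
  exact tendsto_inv_add_smul_smul_add (tendsto_natCast_atTop_atTop.comp hφ) 3 _ _

end shearSeq

/-- Marks the factor `A_{i+1}` as `A`. Over the block `[12·2^k, 18·2^k)` the proportion of `A` among
the first factors climbs from `1/2` to `2/3`; over `[18·2^k, 24·2^k)` it falls back to `1/2`. -/
def InABlock (i : ℕ) : Prop := ∃ k, 12 * 2 ^ k ≤ i ∧ i < 18 * 2 ^ k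

theorem not_inABlock_of_lt_twelve {i : ℕ} (hi : i < 12) : ¬ InABlock i := by
  rintro ⟨k, hk, -⟩
  have : 1 ≤ 2 ^ k := Nat.one_le_two_pow
  omega

theorem not_inABlock_of_le_of_lt {k i : ℕ} (h₁ : 18 * 2 ^ k ≤ i) (h₂ : i < 24 * 2 ^ k) :
    ¬ InABlock i := by
  rintro ⟨j, hj₁, hj₂⟩
  rcases le_or_gt j k with hjk | hjk
  · have : 2 ^ j ≤ 2 ^ k := Nat.pow_le_pow_right two_pos hjk
    omega
  · have : 2 ^ (k + 1) ≤ 2 ^ j := Nat.pow_le_pow_right two_pos hjk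
    rw [pow_succ] at this
    omega

open Classical

theorem count_inABlock_eighteen_mul (k : ℕ) :
    Nat.count InABlock (18 * 2 ^ k) = Nat.count InABlock (12 * 2 ^ k) + 6 * 2 ^ k := by
  rw [show 18 * 2 ^ k = 12 * 2 ^ k + 6 * 2 ^ k by ring, Nat.count_add,
    Nat.count_of_forall (p := fun i => InABlock (12 * 2 ^ k + i))
      fun i hi => ⟨k, by omega, by omega⟩]

theorem count_inABlock_twelve_mul_succ (k : ℕ) :
    Nat.count InABlock (12 * 2 ^ (k + 1)) = Nat.count InABlock (18 * 2 ^ k) := by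
  rw [show 12 * 2 ^ (k + 1) = 18 * 2 ^ k + 6 * 2 ^ k by ring, Nat.count_add,
    Nat.count_of_forall_not (p := fun i => InABlock (18 * 2 ^ k + i))
      fun i hi => not_inABlock_of_le_of_lt (k := k) (by omega) (by omega), add_zero]

theorem count_inABlock_twelve_mul (k : ℕ) : Nat.count InABlock (12 * 2 ^ k) + 6 = 6 * 2 ^ k := by
  induction k with
  | zero => simp [Nat.count_of_forall_not fun i hi => not_inABlock_of_lt_twelve hi]
  | succ k ih =>
    rw [count_inABlock_twelve_mul_succ, count_inABlock_eighteen_mul, pow_succ]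
    omega

theorem cast_count_inABlock_twelve_mul (k : ℕ) :
    (Nat.count InABlock (12 * 2 ^ k) : ℝ) = ((12 * 2 ^ k : ℕ) : ℝ) * (1 / 2) + -6 := by
  have h : (Nat.count InABlock (12 * 2 ^ k) : ℝ) + 6 = 6 * 2 ^ k := by
    exact_mod_cast count_inABlock_twelve_mul k
  push_cast
  linarith

theorem cast_count_inABlock_eighteen_mul (k : ℕ) :
    (Nat.count InABlock (18 * 2 ^ k) : ℝ) = ((18 * 2 ^ k : ℕ) : ℝ) * (2 / 3) + -6 := by
  have h : (Nat.count InABlock (12 * 2 ^ k) : ℝ) + 6 = 6 * 2 ^ k := by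
    exact_mod_cast count_inABlock_twelve_mul k
  rw [count_inABlock_eighteen_mul]
  push_cast
  linarith

theorem strictMono_mul_two_pow {c : ℕ} (hc : 0 < c) : StrictMono fun k : ℕ => c * 2 ^ k :=
  (pow_right_strictMono₀ one_lt_two).const_mul hc

/-- Counterexample 1.3: with `A = [[1,0,1],[0,1,0],[0,0,1]]` and
`B = [[1,0,0],[0,1,1],[0,0,1]]`, some sequence with terms in `{A, B}` has both
`u ⬝ r` and `w ⬝ r` (with `u = (1/2,1/2,0)`, `w = (2/3,1/3,0)`, `r = (0,0,1)`)
as subsequential limits of `P_n/‖P_n‖`; in particular the column vectors in a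
rank-one approximation cannot be taken constant. -/
theorem exists_product_sequence_two_rank_one_limit_points :
    ∃ A : ℕ → Matrix (Fin 3) (Fin 3) ℝ,
      (∀ n, A n = !![(1:ℝ), 0, 1; 0, 1, 0; 0, 0, 1] ∨
            A n = !![(1:ℝ), 0, 0; 0, 1, 1; 0, 0, 1]) ∧
      (∃ φ : ℕ → ℕ, StrictMono φ ∧
        Tendsto (fun k => (matEntrySumNorm (matProd A (φ k)))⁻¹ • matProd A (φ k))
          atTop (nhds (vecMulVec ![(1:ℝ)/2, 1/2, 0] ![(0:ℝ), 0, 1]))) ∧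
      (∃ ψ : ℕ → ℕ, StrictMono ψ ∧
        Tendsto (fun k => (matEntrySumNorm (matProd A (ψ k)))⁻¹ • matProd A (ψ k))
          atTop (nhds (vecMulVec ![(2:ℝ)/3, 1/3, 0] ![(0:ℝ), 0, 1]))) ∧
      ¬ ∃ c : Fin 3 → ℝ, ∃ r : ℕ → Fin 3 → ℝ,
        Tendsto (fun n => (matEntrySumNorm (matProd A n))⁻¹ • matProd A n -
          vecMulVec c (r n)) atTop (nhds 0) := by
  have hφ := strictMono_mul_two_pow (c := 12) (by norm_num)
  have hψ := strictMono_mul_two_pow (c := 18) (by norm_num)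
  have hlimφ := tendsto_normalized_matProd_shearSeq InABlock hφ.tendsto_atTop (v := 1 / 2)
    (by norm_num) cast_count_inABlock_twelve_mul
  have hlimψ := tendsto_normalized_matProd_shearSeq InABlock hψ.tendsto_atTop (v := 1 / 3)
    (by norm_num) cast_count_inABlock_eighteen_mul
  refine ⟨shearSeq InABlock, fun n => ?_, ⟨_, hφ, hlimφ⟩, ⟨_, hψ, hlimψ⟩, ?_⟩
  · unfold shearSeq
    split_ifs
    exacts [.inl rfl, .inr rfl]
  · rintro ⟨c, r, h⟩
    exact not_tendsto_sub_vecMulVec_const hφ.tendsto_atTop hψ.tendsto_atTop hlimφ hlimψ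
      (i := 0) (i' := 1) (j := 2) (by simp) (by norm_num) c r h
end

section
/- Let b ≥ 2, let Ω_b := {0,…,b−1}^ℕ with the product topology of the discrete topology, and let σ be the shift map on Ω_b. Let M_0, …, M_{b−1} be nonnegative d×d real matrices, r_0, …, r_{b−1} nonnegative row vectors in ℝ^d, and c ∈ ℝ^d a column vector with all entries positive, such that M_{ω_1}⋯M_{ω_n} c ≠ 0 for every ω ∈ Ω_b and n ≥ 0; set c_{ω,n} := M_{ω_1}⋯M_{ω_n} c/‖M_{ω_1}⋯M_{ω_n} c‖. Assume: (1) there is a function ω ↦ c_ω such that c_{ω,n} → c_ω uniformly on Ω_b; (2) for each i ∈ {0,…,b−1}, r_i·c_{ω,n} > 0 for all ω and n, and (r_i·c_{ω,n})^{1/n} → 1 uniformly on Ω_b; (3) for every ω ∈ Ω_b and every i ∈ {0,…,b−1}, M_i c_ω ≠ 0. Then there exists a continuous function Φ : Ω_b → ℝ such that lim_{n→∞} ( r_{ω_1} M_{ω_2}⋯M_{ω_n} c / exp(Σ_{k=0}^{n−1} Φ(σ^k ω)) )^{1/n} = 1 uniformly on Ω_b. -/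
/-!
Write `L_n(ω) = ‖M_{ω_1} ⋯ M_{ω_n} c‖`. Peeling off the first letter gives
`L_{n+1}(ω) = g_n(ω) L_n(σω)` with `g_n(ω) = ‖M_{ω_1} c_{σω,n}‖`, so `log L_n(ω)` is the sum of
the `log g_{n-1-k}(σ^k ω)` plus `log ‖c‖`. By (1), `g_n → ‖M_{ω_1} c_{σω}‖` uniformly, and by (3)
and compactness this limit is bounded below by a positive constant; hence
`Φ(ω) := log ‖M_{ω_1} c_{σω}‖` is continuous and `log g_n → Φ` uniformly. The Birkhoff sum of
`Φ` then differs from `log L_{n-1}(σω)` by a Cesàro sum of a null sequence plus `O(1)`, while the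
remaining factor `r_{ω_1} · c_{σω,n-1}` of the cylinder value is `e^{o(n)}` uniformly by (2).
-/

open Filter Matrix

section

variable {b d : ℕ}

/-- `‖v‖`: sum of the absolute values of the entries of a real vector. -/
noncomputable def vecEntrySumNorm (v : Fin d → ℝ) : ℝ :=
  ∑ i, |v i|

/-- `M_{ω_1} ⋯ M_{ω_n}` (with `ω 0 = ω_1`). -/
def wordProd (M : Fin b → Matrix (Fin d) (Fin d) ℝ) (ω : ℕ → Fin b) (n : ℕ) :
    Matrix (Fin d) (Fin d) ℝ :=
  ((List.range n).map fun t => M (ω t)).prod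

/-- The shift on `Ω_b = {0,…,b−1}^ℕ`. -/
def shiftSeq (ω : ℕ → Fin b) : ℕ → Fin b := fun t => ω (t + 1)

open Finset Real Topology

lemma vecEntrySumNorm_nonneg (v : Fin d → ℝ) : 0 ≤ vecEntrySumNorm v :=
  sum_nonneg fun i _ => abs_nonneg (v i)

lemma vecEntrySumNorm_pos {v : Fin d → ℝ} (hv : v ≠ 0) : 0 < vecEntrySumNorm v := by
  obtain ⟨i, hi⟩ := Function.ne_iff.1 hv
  exact (abs_pos.2 hi).trans_le (single_le_sum (fun j _ => abs_nonneg (v j)) (mem_univ i))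

lemma vecEntrySumNorm_smul (a : ℝ) (v : Fin d → ℝ) :
    vecEntrySumNorm (a • v) = |a| * vecEntrySumNorm v := by
  simp [vecEntrySumNorm, abs_mul, mul_sum]

lemma abs_vecEntrySumNorm_sub_le (v w : Fin d → ℝ) :
    |vecEntrySumNorm v - vecEntrySumNorm w| ≤ vecEntrySumNorm (v - w) := by
  rw [vecEntrySumNorm, vecEntrySumNorm, ← sum_sub_distrib]
  exact (abs_sum_le_sum_abs _ _).trans (sum_le_sum fun i _ => abs_abs_sub_abs_le_abs_sub _ _)

lemma vecEntrySumNorm_mulVec_le (A : Matrix (Fin d) (Fin d) ℝ) (v : Fin d → ℝ) :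
    vecEntrySumNorm (A *ᵥ v) ≤ (∑ a, ∑ a', |A a a'|) * vecEntrySumNorm v := by
  simp only [vecEntrySumNorm, sum_mul]
  gcongr with a
  calc |(A *ᵥ v) a| ≤ ∑ a', |A a a'| * |v a'| := by
        simpa only [mulVec, dotProduct, abs_mul] using
          abs_sum_le_sum_abs (fun a' => A a a' * v a') univ
    _ ≤ ∑ a', |A a a'| * ∑ i, |v i| := by
        gcongr with a'
        exact single_le_sum (fun i _ => abs_nonneg (v i)) (mem_univ a')

lemma continuous_vecEntrySumNorm : Continuous (vecEntrySumNorm : (Fin d → ℝ) → ℝ) :=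
  continuous_finsetSum _ fun i _ => (continuous_apply i).abs

lemma abs_sum_iterate_sub_le {X : Type*} (T : X → X) {g : ℕ → X → ℝ} {φ : X → ℝ} {e : ℕ → ℝ}
    (he : ∀ m x, |g m x - φ x| ≤ e m) (x : X) (n : ℕ) :
    |∑ k ∈ range n, g (n - 1 - k) (T^[k] x) - ∑ k ∈ range n, φ (T^[k] x)|
      ≤ ∑ m ∈ range n, e m := by
  rw [← sum_sub_distrib, ← sum_range_reflect e n]
  exact (abs_sum_le_sum_abs _ _).trans (sum_le_sum fun k _ => he _ _)

lemma log_sub_log_le_abs_sub_div {a b δ : ℝ} (hδ : 0 < δ) (ha : 0 < a) (hb : δ ≤ b) :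
    log a - log b ≤ |a - b| / δ := by
  have hb0 : 0 < b := hδ.trans_le hb
  calc log a - log b = log (a / b) := (log_div ha.ne' hb0.ne').symm
    _ ≤ a / b - 1 := log_le_sub_one_of_pos (div_pos ha hb0)
    _ = (a - b) / b := by field_simp
    _ ≤ |a - b| / b := by gcongr; exact le_abs_self _
    _ ≤ |a - b| / δ := by gcongr

lemma abs_log_sub_log_le_abs_sub_div {a b δ : ℝ} (hδ : 0 < δ) (ha : δ ≤ a) (hb : δ ≤ b) :
    |log a - log b| ≤ |a - b| / δ :=
  abs_sub_le_iff.2 ⟨log_sub_log_le_abs_sub_div hδ (hδ.trans_le ha) hb,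
    abs_sub_comm a b ▸ log_sub_log_le_abs_sub_div hδ (hδ.trans_le hb) ha⟩

lemma abs_log_le_two_mul_abs_sub_one {z : ℝ} (hz : |z - 1| ≤ 1 / 2) :
    |log z| ≤ 2 * |z - 1| := by
  have h := abs_log_sub_add_sum_range_le (x := 1 - z) (by rw [abs_sub_comm]; linarith) 0
  rw [abs_sub_comm] at h
  simp only [range_zero, sum_empty, zero_add, sub_sub_cancel, pow_one] at h
  calc |log z| ≤ |z - 1| / (1 - |z - 1|) := h
    _ ≤ |z - 1| / (1 / 2) := by gcongr; linarith
    _ = 2 * |z - 1| := by ring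

lemma abs_rpow_one_div_sub_one_le {x t δ : ℝ} (hx : 0 < x) (ht : 0 < t) (hδ : δ ≤ 1)
    (h : |log x| ≤ t * δ) : |x ^ (1 / t) - 1| ≤ 2 * δ := by
  have hexp : |log x * (1 / t)| ≤ δ := by
    rw [abs_mul, abs_of_pos (one_div_pos.2 ht), mul_one_div, div_le_iff₀ ht, mul_comm]
    exact h
  rw [rpow_def_of_pos hx]
  exact (abs_exp_sub_one_le (hexp.trans hδ)).trans (by linarith)

lemma abs_log_le_of_abs_rpow_one_div_sub_one_le {y t δ : ℝ} (hy : 0 < y) (ht : 0 < t)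
    (hδ : δ ≤ 1 / 2) (h : |y ^ (1 / t) - 1| ≤ δ) : |log y| ≤ t * (2 * δ) := by
  have hlog := abs_log_le_two_mul_abs_sub_one (h.trans hδ)
  rw [log_rpow hy, abs_mul, abs_of_pos (one_div_pos.2 ht), one_div_mul_eq_div,
    div_le_iff₀ ht] at hlog
  nlinarith

lemma TendstoUniformly.log_of_forall_le {ι X : Type*} {p : Filter ι} {f : ι → X → ℝ}
    {F : X → ℝ} {δ : ℝ} (h : TendstoUniformly f F p) (hδ : 0 < δ) (hF : ∀ x, δ ≤ F x) :
    TendstoUniformly (fun i x => log (f i x)) (fun x => log (F x)) p := by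
  rw [Metric.tendstoUniformly_iff] at h ⊢
  intro ε hε
  filter_upwards [h (δ / 2 * min 1 ε) (by positivity)] with i hi x
  have hclose : |F x - f i x| < δ / 2 * min 1 ε := hi x
  have hmin : min 1 ε ≤ 1 := min_le_left 1 ε
  have hfi : δ / 2 ≤ f i x := by nlinarith [(abs_lt.1 hclose).2, hF x]
  calc dist (log (F x)) (log (f i x))
      ≤ |F x - f i x| / (δ / 2) :=
        abs_log_sub_log_le_abs_sub_div (half_pos hδ) (by linarith [hF x]) hfi
    _ < δ / 2 * min 1 ε / (δ / 2) := by gcongr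
    _ ≤ ε := by rw [mul_div_cancel_left₀ _ (half_pos hδ).ne']; exact min_le_right 1 ε

lemma TendstoUniformly.exists_forall_abs_sub_le_of_compactSpace {ι X : Type*} [TopologicalSpace X]
    [CompactSpace X] {l : Filter ι} {f : ι → X → ℝ} {φ : X → ℝ} (hf : ∀ i, Continuous (f i))
    (hφ : Continuous φ) (h : TendstoUniformly f φ l) :
    ∃ e : ι → ℝ, Tendsto e l (𝓝 0) ∧ ∀ i x, |f i x - φ x| ≤ e i := by
  let F : ι → C(X, ℝ) := fun i => ⟨f i, hf i⟩
  let Φ : C(X, ℝ) := ⟨φ, hφ⟩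
  exact ⟨fun i => dist (F i) Φ,
    tendsto_iff_dist_tendsto_zero.1 (ContinuousMap.tendsto_iff_tendstoUniformly.2 h),
    fun i x => ContinuousMap.dist_apply_le_dist (f := F i) (g := Φ) x⟩

section WordProd

variable (M : Fin b → Matrix (Fin d) (Fin d) ℝ) (c : Fin d → ℝ)

lemma wordProd_succ (ω : ℕ → Fin b) (n : ℕ) :
    wordProd M ω (n + 1) = M (ω 0) * wordProd M (shiftSeq ω) n := by
  simp only [wordProd, List.range_succ_eq_map, List.map_cons, List.map_map, List.prod_cons]
  rfl

lemma continuous_shiftSeq : Continuous (shiftSeq : (ℕ → Fin b) → ℕ → Fin b) :=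
  continuous_pi fun t => continuous_apply (t + 1)

lemma continuous_firstLetter : Continuous fun ω : ℕ → Fin b => M (ω 0) :=
  continuous_of_discreteTopology.comp (continuous_apply 0)

lemma continuous_wordProd (n : ℕ) : Continuous fun ω : ℕ → Fin b => wordProd M ω n := by
  induction n with
  | zero => exact continuous_const
  | succ n ih =>
    simp only [wordProd_succ]
    exact (continuous_firstLetter M).matrix_mul (ih.comp continuous_shiftSeq)

/-- The normalized vector `c_{ω,n}`. -/
noncomputable def wordDir (ω : ℕ → Fin b) (n : ℕ) : Fin d → ℝ :=
  (vecEntrySumNorm (wordProd M ω n *ᵥ c))⁻¹ • (wordProd M ω n *ᵥ c)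

/-- The growth factor `‖M_{ω_1} ⋯ M_{ω_{n+1}} c‖ / ‖M_{ω_2} ⋯ M_{ω_{n+1}} c‖`. -/
noncomputable def stepGrowth (n : ℕ) (ω : ℕ → Fin b) : ℝ :=
  vecEntrySumNorm (M (ω 0) *ᵥ wordDir M c (shiftSeq ω) n)

variable {M c}

lemma wordProd_mulVec_eq_smul_wordDir {ω : ℕ → Fin b} {n : ℕ} (hne : wordProd M ω n *ᵥ c ≠ 0) :
    wordProd M ω n *ᵥ c = vecEntrySumNorm (wordProd M ω n *ᵥ c) • wordDir M c ω n := by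
  rw [wordDir, smul_smul, mul_inv_cancel₀ (vecEntrySumNorm_pos hne).ne', one_smul]

lemma vecEntrySumNorm_wordProd_succ {ω : ℕ → Fin b} {n : ℕ}
    (hne : wordProd M (shiftSeq ω) n *ᵥ c ≠ 0) :
    vecEntrySumNorm (wordProd M ω (n + 1) *ᵥ c)
      = stepGrowth M c n ω * vecEntrySumNorm (wordProd M (shiftSeq ω) n *ᵥ c) := by
  conv_lhs => rw [wordProd_succ, ← mulVec_mulVec, wordProd_mulVec_eq_smul_wordDir hne]
  rw [mulVec_smul, vecEntrySumNorm_smul, abs_of_nonneg (vecEntrySumNorm_nonneg _), mul_comm,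
    stepGrowth]

lemma stepGrowth_pos (hne : ∀ ω n, wordProd M ω n *ᵥ c ≠ 0) (n : ℕ) (ω : ℕ → Fin b) :
    0 < stepGrowth M c n ω := by
  have h := vecEntrySumNorm_pos (hne ω (n + 1))
  rwa [vecEntrySumNorm_wordProd_succ (hne _ n),
    mul_pos_iff_of_pos_right (vecEntrySumNorm_pos (hne _ n))] at h

lemma continuous_wordDir (hne : ∀ ω n, wordProd M ω n *ᵥ c ≠ 0) (n : ℕ) :
    Continuous fun ω => wordDir M c ω n := by
  have hv := (continuous_wordProd M n).matrix_mulVec (continuous_const (y := c))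
  exact ((continuous_vecEntrySumNorm.comp hv).inv₀
    fun ω => (vecEntrySumNorm_pos (hne ω n)).ne').smul hv

lemma continuous_stepGrowth (hne : ∀ ω n, wordProd M ω n *ᵥ c ≠ 0) (n : ℕ) :
    Continuous (stepGrowth M c n) :=
  continuous_vecEntrySumNorm.comp
    ((continuous_firstLetter M).matrix_mulVec ((continuous_wordDir hne n).comp continuous_shiftSeq))

lemma log_vecEntrySumNorm_wordProd (hne : ∀ ω n, wordProd M ω n *ᵥ c ≠ 0) (n : ℕ) (ω : ℕ → Fin b) :
    log (vecEntrySumNorm (wordProd M ω n *ᵥ c))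
      = ∑ k ∈ range n, log (stepGrowth M c (n - 1 - k) (shiftSeq^[k] ω))
        + log (vecEntrySumNorm c) := by
  induction n generalizing ω with
  | zero => simp [wordProd]
  | succ n ih =>
    rw [vecEntrySumNorm_wordProd_succ (hne _ n),
      log_mul (stepGrowth_pos hne n ω).ne' (vecEntrySumNorm_pos (hne _ n)).ne', ih, sum_range_succ']
    simp only [Function.iterate_succ_apply, Function.iterate_zero_apply, add_tsub_cancel_right,
      tsub_zero, Nat.sub_sub, add_comm 1]
    ring

lemma tendstoUniformly_stepGrowth {v : (ℕ → Fin b) → Fin d → ℝ}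
    (h : ∀ ε > 0, ∃ N : ℕ, ∀ n ≥ N, ∀ ω, vecEntrySumNorm (wordDir M c ω n - v ω) < ε) :
    TendstoUniformly (fun n => stepGrowth M c n)
      (fun ω => vecEntrySumNorm (M (ω 0) *ᵥ v (shiftSeq ω))) atTop := by
  set K := ∑ i, ∑ a, ∑ a', |M i a a'|
  have hK : ∀ i w, vecEntrySumNorm (M i *ᵥ w) ≤ K * vecEntrySumNorm w := fun i w =>
    (vecEntrySumNorm_mulVec_le (M i) w).trans <| by
      gcongr
      · exact vecEntrySumNorm_nonneg w
      · exact single_le_sum (f := fun i => ∑ a, ∑ a', |M i a a'|)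
          (fun j _ => by positivity) (mem_univ i)
  rw [Metric.tendstoUniformly_iff]
  intro ε hε
  obtain ⟨N, hN⟩ := h (ε / (K + 1)) (by positivity)
  filter_upwards [eventually_ge_atTop N] with n hn ω
  have hdiff := hN n hn (shiftSeq ω)
  calc dist (vecEntrySumNorm (M (ω 0) *ᵥ v (shiftSeq ω))) (stepGrowth M c n ω)
      ≤ vecEntrySumNorm (M (ω 0) *ᵥ (wordDir M c (shiftSeq ω) n - v (shiftSeq ω))) := by
        rw [dist_comm, Real.dist_eq, mulVec_sub]
        exact abs_vecEntrySumNorm_sub_le _ _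
    _ ≤ (K + 1) * vecEntrySumNorm (wordDir M c (shiftSeq ω) n - v (shiftSeq ω)) :=
        (hK _ _).trans (by gcongr; exacts [vecEntrySumNorm_nonneg _, by linarith])
    _ < ε := by rwa [lt_div_iff₀' (by positivity)] at hdiff

lemma abs_log_dotProduct_wordProd_sub_sum_le (hne : ∀ ω n, wordProd M ω n *ᵥ c ≠ 0)
    {Φ : (ℕ → Fin b) → ℝ} {e : ℕ → ℝ} (he : ∀ m τ, |log (stepGrowth M c m τ) - Φ τ| ≤ e m)
    {ρ : Fin d → ℝ} {ω : ℕ → Fin b} {m : ℕ} (hρ : 0 < ρ ⬝ᵥ wordDir M c (shiftSeq ω) m) :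
    |log (ρ ⬝ᵥ (wordProd M (shiftSeq ω) m *ᵥ c)) - ∑ t ∈ range (m + 1), Φ (shiftSeq^[t] ω)|
      ≤ ∑ j ∈ range m, e j + |log (vecEntrySumNorm c) - Φ ω|
        + |log (ρ ⬝ᵥ wordDir M c (shiftSeq ω) m)| := by
  have hsum := abs_sum_iterate_sub_le shiftSeq he (shiftSeq ω) m
  rw [wordProd_mulVec_eq_smul_wordDir (hne _ m), dotProduct_smul, smul_eq_mul,
    log_mul (vecEntrySumNorm_pos (hne _ m)).ne' hρ.ne', log_vecEntrySumNorm_wordProd hne,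
    sum_range_succ']
  simp only [Function.iterate_succ_apply, Function.iterate_zero_apply]
  set A := ∑ k ∈ range m, log (stepGrowth M c (m - 1 - k) (shiftSeq^[k] (shiftSeq ω)))
  set B := ∑ k ∈ range m, Φ (shiftSeq^[k] (shiftSeq ω))
  calc |A + log (vecEntrySumNorm c) + log (ρ ⬝ᵥ wordDir M c (shiftSeq ω) m) - (B + Φ ω)|
      = |(A - B) + (log (vecEntrySumNorm c) - Φ ω) + log (ρ ⬝ᵥ wordDir M c (shiftSeq ω) m)| := by
        ring_nf
    _ ≤ |A - B| + |log (vecEntrySumNorm c) - Φ ω| + |log (ρ ⬝ᵥ wordDir M c (shiftSeq ω) m)| :=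
        (abs_add_le _ _).trans (by gcongr; exact abs_add_le _ _)
    _ ≤ _ := by gcongr

lemma dotProduct_wordProd_mulVec_pos {ω : ℕ → Fin b} {m : ℕ} (hne : wordProd M ω m *ᵥ c ≠ 0)
    {ρ : Fin d → ℝ} (hρ : 0 < ρ ⬝ᵥ wordDir M c ω m) : 0 < ρ ⬝ᵥ (wordProd M ω m *ᵥ c) := by
  rw [wordProd_mulVec_eq_smul_wordDir hne, dotProduct_smul, smul_eq_mul]
  exact mul_pos (vecEntrySumNorm_pos hne) hρ

lemma eventually_abs_log_cylinder_sub_sum_le (hne : ∀ ω n, wordProd M ω n *ᵥ c ≠ 0)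
    {r : Fin b → Fin d → ℝ} (hpos : ∀ i ω m, 0 < r i ⬝ᵥ wordDir M c ω m)
    (hr : ∀ δ > 0, ∀ᶠ m : ℕ in atTop, ∀ p : (ℕ → Fin b) × Fin b,
      |log (r p.2 ⬝ᵥ wordDir M c p.1 m)| ≤ m * δ)
    {Φ : (ℕ → Fin b) → ℝ} (hΦ : Continuous Φ) {e : ℕ → ℝ} (he : Tendsto e atTop (𝓝 0))
    (hle : ∀ m τ, |log (stepGrowth M c m τ) - Φ τ| ≤ e m) :
    ∀ δ > 0, ∀ᶠ m : ℕ in atTop, ∀ ω,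
      |log (r (ω 0) ⬝ᵥ (wordProd M (shiftSeq ω) m *ᵥ c))
        - ∑ t ∈ range (m + 1), Φ (shiftSeq^[t] ω)| ≤ (m + 1) * δ := by
  obtain ⟨C, hC⟩ := isCompact_univ.exists_bound_of_continuousOn
    (continuous_const (y := log (vecEntrySumNorm c)) |>.sub hΦ).continuousOn
  have hcesaro : Tendsto (fun m : ℕ => (m : ℝ)⁻¹ * (∑ j ∈ range m, e j + C)) atTop (𝓝 0) := by
    simpa [mul_add] using
      he.cesaro.add ((tendsto_inv_atTop_zero.comp tendsto_natCast_atTop_atTop).mul_const C)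
  intro δ hδ
  filter_upwards [hcesaro.eventually (gt_mem_nhds (half_pos hδ)), hr (δ / 2) (half_pos hδ),
    eventually_gt_atTop 0] with m hm hrm hm0 ω
  have hm' : ∑ j ∈ range m, e j + C < m * (δ / 2) := by
    rwa [inv_mul_lt_iff₀ (by positivity)] at hm
  calc _ ≤ ∑ j ∈ range m, e j + |log (vecEntrySumNorm c) - Φ ω|
          + |log (r (ω 0) ⬝ᵥ wordDir M c (shiftSeq ω) m)| :=
        abs_log_dotProduct_wordProd_sub_sum_le hne hle (hpos _ _ _)
    _ ≤ m * δ := by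
        have hCω : |log (vecEntrySumNorm c) - Φ ω| ≤ C := hC ω (Set.mem_univ ω)
        linarith [hrm (shiftSeq ω, ω 0)]
    _ ≤ (m + 1) * δ := by gcongr; linarith

end WordProd

lemma eventually_abs_log_le_of_rpow_one_div {X : Type*} {y : ℕ → X → ℝ} (hy : ∀ n x, 0 < y n x)
    (h : ∀ ε > 0, ∃ N : ℕ, ∀ n ≥ N, ∀ x, |y n x ^ (1 / (n : ℝ)) - 1| < ε) :
    ∀ δ > 0, ∀ᶠ n : ℕ in atTop, ∀ x, |log (y n x)| ≤ n * δ := by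
  intro δ hδ
  obtain ⟨N, hN⟩ := h (min (1 / 2) (δ / 2)) (by positivity)
  filter_upwards [eventually_ge_atTop N, eventually_gt_atTop 0] with n hnN hn x
  calc |log (y n x)| ≤ n * (2 * min (1 / 2) (δ / 2)) :=
        abs_log_le_of_abs_rpow_one_div_sub_one_le (hy n x) (by positivity) (min_le_left _ _)
          (hN n hnN x).le
    _ ≤ n * δ := by gcongr; linarith [min_le_right (1 / 2 : ℝ) (δ / 2)]

lemma exists_forall_abs_rpow_one_div_sub_one_lt {X : Type*} {x : ℕ → X → ℝ}
    (hx : ∀ m ω, 0 < x (m + 1) ω)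
    (h : ∀ δ > 0, ∀ᶠ m : ℕ in atTop, ∀ ω, |log (x (m + 1) ω)| ≤ (m + 1) * δ) :
    ∀ ε > 0, ∃ N : ℕ, ∀ n ≥ N, ∀ ω, |x n ω ^ (1 / (n : ℝ)) - 1| < ε := by
  intro ε hε
  obtain ⟨N, hN⟩ := eventually_atTop.1 (h (min 1 (ε / 3)) (by positivity))
  refine ⟨N + 1, fun n hn ω => ?_⟩
  obtain ⟨m, rfl⟩ : ∃ m, n = m + 1 := ⟨n - 1, by omega⟩
  have := abs_rpow_one_div_sub_one_le (t := ((m + 1 : ℕ) : ℝ)) (hx m ω) (by positivity)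
    (min_le_left _ _) (by exact_mod_cast hN m (by omega) ω)
  linarith [min_le_right 1 (ε / 3)]

theorem sofic_measure_weak_gibbs_general
    (M : Fin b → Matrix (Fin d) (Fin d) ℝ)
    (r : Fin b → Fin d → ℝ)
    (c : Fin d → ℝ)
    (hne : ∀ (ω : ℕ → Fin b) (n : ℕ), wordProd M ω n *ᵥ c ≠ 0)
    (cω : (ℕ → Fin b) → Fin d → ℝ)
    -- (1) uniform convergence of `c_{ω,n}` to `c_ω`
    (h1 : ∀ ε > (0 : ℝ), ∃ N₀ : ℕ, ∀ n ≥ N₀, ∀ ω : ℕ → Fin b,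
      vecEntrySumNorm
        ((vecEntrySumNorm (wordProd M ω n *ᵥ c))⁻¹ • (wordProd M ω n *ᵥ c) - cω ω) < ε)
    -- (2) `r_i · c_{ω,n} > 0` and `(r_i · c_{ω,n})^{1/n} → 1` uniformly
    (h2pos : ∀ (i : Fin b) (ω : ℕ → Fin b) (n : ℕ),
      0 < r i ⬝ᵥ ((vecEntrySumNorm (wordProd M ω n *ᵥ c))⁻¹ • (wordProd M ω n *ᵥ c)))
    (h2 : ∀ ε > (0 : ℝ), ∃ N₀ : ℕ, ∀ n ≥ N₀, ∀ (ω : ℕ → Fin b) (i : Fin b),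
      |(r i ⬝ᵥ ((vecEntrySumNorm (wordProd M ω n *ᵥ c))⁻¹ • (wordProd M ω n *ᵥ c)))
        ^ ((1 : ℝ) / (n : ℝ)) - 1| < ε)
    -- (3) `M_i c_ω ≠ 0`
    (h3 : ∀ (ω : ℕ → Fin b) (i : Fin b), M i *ᵥ cω ω ≠ 0) :
    ∃ Φ : (ℕ → Fin b) → ℝ, Continuous Φ ∧
      ∀ ε > (0 : ℝ), ∃ N₀ : ℕ, ∀ n ≥ N₀, ∀ ω : ℕ → Fin b,
        |((r (ω 0) ⬝ᵥ (wordProd M (shiftSeq ω) (n - 1) *ᵥ c)) /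
            Real.exp (∑ t ∈ Finset.range n, Φ (shiftSeq^[t] ω)))
          ^ ((1 : ℝ) / (n : ℝ)) - 1| < ε := by
  set F : (ℕ → Fin b) → ℝ := fun τ => vecEntrySumNorm (M (τ 0) *ᵥ cω (shiftSeq τ))
  have hgF : TendstoUniformly (fun n => stepGrowth M c n) F atTop := tendstoUniformly_stepGrowth h1
  have hF : Continuous F :=
    hgF.continuous (Eventually.of_forall (continuous_stepGrowth hne)).frequently
  obtain ⟨δ, hδ, hFδ⟩ := isCompact_univ.exists_forall_le' hF.continuousOn (a := 0)
    fun τ _ => vecEntrySumNorm_pos (h3 _ _)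
  have hΦ : Continuous fun τ => log (F τ) := hF.log fun τ => (hδ.trans_le (hFδ τ trivial)).ne'
  have hlogg : TendstoUniformly (fun m τ => log (stepGrowth M c m τ)) (fun τ => log (F τ)) atTop :=
    hgF.log_of_forall_le hδ fun τ => hFδ τ trivial
  obtain ⟨e, he, hle⟩ := hlogg.exists_forall_abs_sub_le_of_compactSpace
    (fun m => (continuous_stepGrowth hne m).log fun τ => (stepGrowth_pos hne m τ).ne') hΦ
  have hr := eventually_abs_log_le_of_rpow_one_div
    (y := fun m (p : (ℕ → Fin b) × Fin b) => r p.2 ⬝ᵥ wordDir M c p.1 m)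
    (fun m p => h2pos p.2 p.1 m) fun ε hε => (h2 ε hε).imp fun N hN n hn p => hN n hn p.1 p.2
  have hlog := eventually_abs_log_cylinder_sub_sum_le hne h2pos hr hΦ he hle
  have hν : ∀ m ω, 0 < r (ω 0) ⬝ᵥ (wordProd M (shiftSeq ω) m *ᵥ c) := fun m ω =>
    dotProduct_wordProd_mulVec_pos (hne _ _) (h2pos _ _ _)
  refine ⟨_, hΦ, exists_forall_abs_rpow_one_div_sub_one_lt (fun m ω => ?_) fun δ hδ => ?_⟩
  · exact div_pos (hν _ _) (exp_pos _)
  · filter_upwards [hlog δ hδ] with m hm ω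
    rw [add_tsub_cancel_right, log_div (hν _ _).ne' (exp_pos _).ne', log_exp]
    exact hm ω

/-- Theorem B.3: under the three conditions on the linear representation
`(r_i, M_i, c)`, the associated sofic measure has the weak-Gibbs property: there is a
continuous potential `Φ` with
`(ν([ω_1…ω_n]) / exp(Σ_{k<n} Φ(σ^k ω)))^{1/n} → 1` uniformly on `Ω_b`. -/
theorem sofic_measure_weak_gibbs (hb : 2 ≤ b)
    (M : Fin b → Matrix (Fin d) (Fin d) ℝ)
    (hMnonneg : ∀ (i : Fin b) (a a' : Fin d), 0 ≤ M i a a')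
    (r : Fin b → Fin d → ℝ)
    (hrnonneg : ∀ (i : Fin b) (j : Fin d), 0 ≤ r i j)
    (c : Fin d → ℝ) (hc : ∀ j, 0 < c j)
    (hne : ∀ (ω : ℕ → Fin b) (n : ℕ), wordProd M ω n *ᵥ c ≠ 0)
    (cω : (ℕ → Fin b) → Fin d → ℝ)
    -- (1) uniform convergence of `c_{ω,n}` to `c_ω`
    (h1 : ∀ ε > (0 : ℝ), ∃ N₀ : ℕ, ∀ n ≥ N₀, ∀ ω : ℕ → Fin b,
      vecEntrySumNorm
        ((vecEntrySumNorm (wordProd M ω n *ᵥ c))⁻¹ • (wordProd M ω n *ᵥ c) - cω ω) < ε)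
    -- (2) `r_i · c_{ω,n} > 0` and `(r_i · c_{ω,n})^{1/n} → 1` uniformly
    (h2pos : ∀ (i : Fin b) (ω : ℕ → Fin b) (n : ℕ),
      0 < r i ⬝ᵥ ((vecEntrySumNorm (wordProd M ω n *ᵥ c))⁻¹ • (wordProd M ω n *ᵥ c)))
    (h2 : ∀ ε > (0 : ℝ), ∃ N₀ : ℕ, ∀ n ≥ N₀, ∀ (ω : ℕ → Fin b) (i : Fin b),
      |(r i ⬝ᵥ ((vecEntrySumNorm (wordProd M ω n *ᵥ c))⁻¹ • (wordProd M ω n *ᵥ c)))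
        ^ ((1 : ℝ) / (n : ℝ)) - 1| < ε)
    -- (3) `M_i c_ω ≠ 0`
    (h3 : ∀ (ω : ℕ → Fin b) (i : Fin b), M i *ᵥ cω ω ≠ 0) :
    ∃ Φ : (ℕ → Fin b) → ℝ, Continuous Φ ∧
      ∀ ε > (0 : ℝ), ∃ N₀ : ℕ, ∀ n ≥ N₀, ∀ ω : ℕ → Fin b,
        |((r (ω 0) ⬝ᵥ (wordProd M (shiftSeq ω) (n - 1) *ᵥ c)) /
            Real.exp (∑ t ∈ Finset.range n, Φ (shiftSeq^[t] ω)))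
          ^ ((1 : ℝ) / (n : ℝ)) - 1| < ε :=
  sofic_measure_weak_gibbs_general M r c hne cω h1 h2pos h2 h3

end
end
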